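/- arXiv:1103.5846 — 3 statements merged into one kernel-verified Lean document; each statement's English description precedes it below -/
import Mathlib

section
/- If Σ is a connected bipartite graph, then the diameter of its subdivision graph S(Σ) equals twice the diameter of Σ. -/
/-!
A walk in `S(G)` between two vertices of `G` alternates between vertices and edges of `G`, so
it is exactly twice as long as the walk of `G` it traces; hence distances between vertices of `G`
double. An edge-vertex `ab` is one step from `a` and from `b`, and in a bipartite graph the
distances from any `x` to `a` and to `b` differ by exactly one, so the nearer end `w` satisfies
`d(x, w) + 1 ≤ diam G` and `ab` lies within `2 diam G - 1` of `x`. Distances are taken in `ℕ∞`,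
so unreachable pairs (distance `⊤` on both sides) need no separate case.
-/

open SimpleGraph Sum

variable {V : Type*}

/-- The subdivision graph of a simple graph: vertices are original vertices plus edges,
with adjacency given by incidence. -/
def SimpleGraph.subdivision (G : SimpleGraph V) : SimpleGraph (V ⊕ G.edgeSet) where
  Adj a b :=
    match a, b with
    | Sum.inl x, Sum.inr e => x ∈ (e : Sym2 V)
    | Sum.inr e, Sum.inl x => x ∈ (e : Sym2 V)
    | _, _ => False
  symm := ⟨by
    rintro (x | e) (y | f) h <;> simp_all⟩
  loopless := ⟨by
    rintro (x | e) h <;> simp_all⟩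

namespace SimpleGraph

variable {G : SimpleGraph V} {x y : V}

lemma subdivision_adj_inl_inr {e : G.edgeSet} :
    G.subdivision.Adj (inl x) (inr e) ↔ x ∈ (e : Sym2 V) := Iff.rfl

lemma subdivision_adj_inr_inl {e : G.edgeSet} :
    G.subdivision.Adj (inr e) (inl x) ↔ x ∈ (e : Sym2 V) := Iff.rfl

def Walk.toSubdivision : ∀ {x y : V}, G.Walk x y → G.subdivision.Walk (inl x) (inl y)
  | _, _, .nil => .nil
  | u, _, .cons (v := v) h p =>
    .cons (v := inr ⟨s(u, v), h⟩) (subdivision_adj_inl_inr.2 (Sym2.mem_mk_left u v))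
      (.cons (subdivision_adj_inr_inl.2 (Sym2.mem_mk_right u v)) p.toSubdivision)

@[simp]
lemma Walk.length_toSubdivision (p : G.Walk x y) : p.toSubdivision.length = 2 * p.length := by
  induction p with
  | nil => rfl
  | cons _ _ ih => simp only [toSubdivision, length_cons, ih]; ring

lemma subdivision_edist_inl_inr_le_one {e : G.edgeSet} (hx : x ∈ (e : Sym2 V)) :
    G.subdivision.edist (inl x) (inr e) ≤ 1 :=
  (edist_eq_one_iff_adj.2 hx).le

lemma edist_le_one_of_mem_edge {e : Sym2 V} (hx : x ∈ e) (hy : y ∈ e) (he : e ∈ G.edgeSet) :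
    G.edist x y ≤ 1 := by
  rcases eq_or_ne x y with rfl | hne
  · simp
  · rw [Sym2.mem_and_mem_iff hne |>.1 ⟨hx, hy⟩] at he
    exact (edist_eq_one_iff_adj.2 he).le

lemma two_mul_edist_le_length_of_subdivision_walk :
    ∀ {x y : V} (p : G.subdivision.Walk (inl x) (inl y)), 2 * G.edist x y ≤ p.length
  | _, _, .nil => by simp
  | _, _, .cons (v := inl _) h _ => h.elim
  | _, _, .cons (v := inr _) _ (.cons (v := inr _) h _) => h.elim
  | x, y, .cons (v := inr e) hx (.cons (v := inl z) hz p) => by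
    have hxz : G.edist x z ≤ 1 := edist_le_one_of_mem_edge hx hz e.2
    have ih := two_mul_edist_le_length_of_subdivision_walk p
    calc 2 * G.edist x y ≤ 2 * (G.edist x z + G.edist z y) := by gcongr; exact G.edist_triangle
      _ ≤ 2 * (1 + G.edist z y) := by gcongr
      _ = 2 + 2 * G.edist z y := by ring
      _ ≤ 2 + p.length := by gcongr
      _ = _ := by simp only [Walk.length_cons]; push_cast; ring

lemma subdivision_edist_inl_inl : G.subdivision.edist (inl x) (inl y) = 2 * G.edist x y := by
  refine le_antisymm ?_ (le_iInf two_mul_edist_le_length_of_subdivision_walk)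
  calc G.subdivision.edist (inl x) (inl y) ≤ ⨅ p : G.Walk x y, 2 * (p.length : ℕ∞) :=
        le_iInf fun p => (edist_le p.toSubdivision).trans_eq (by simp)
    _ = 2 * G.edist x y := (ENat.mul_iInf' (by simp)).symm

lemma Adj.edist_add_one_eq_or (hbip : G.Colorable 2) {a b : V} (hab : G.Adj a b) (x : V) :
    G.edist x a + 1 = G.edist x b ∨ G.edist x b + 1 = G.edist x a := by
  by_cases hxa : G.Reachable x a
  · have hxb := hxa.trans hab.reachable
    obtain ⟨pa, hpa⟩ := hxa.exists_walk_length_eq_dist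
    obtain ⟨pb, hpb⟩ := hxb.exists_walk_length_eq_dist
    -- the loop `x → a → b → x` has odd length when the two distances agree
    have heven := two_colorable_iff_forall_loop_even.1 hbip x ((pa.concat hab).append pb.reverse)
    simp only [Walk.length_append, Walk.length_concat, Walk.length_reverse, hpa, hpb] at heven
    rw [← hxa.coe_dist_eq_edist, ← hxb.coe_dist_eq_edist]
    obtain ⟨k, hk⟩ := heven
    rcases hab.diff_dist_adj (u := x) with h | h | h <;> norm_cast <;> omega
  · have hxb : ¬G.Reachable x b := fun h => hxa (h.trans hab.symm.reachable)
    simp [edist_eq_top_of_not_reachable hxa, edist_eq_top_of_not_reachable hxb]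

lemma exists_mem_edist_add_one_le_ediam (hbip : G.Colorable 2) (e : G.edgeSet) (x : V) :
    ∃ w ∈ (e : Sym2 V), G.edist x w + 1 ≤ G.ediam := by
  obtain ⟨e, he⟩ := e
  induction e using Sym2.ind with
  | _ a b =>
    rcases Adj.edist_add_one_eq_or hbip he x with h | h
    · exact ⟨a, Sym2.mem_mk_left a b, h ▸ edist_le_ediam⟩
    · exact ⟨b, Sym2.mem_mk_right a b, h ▸ edist_le_ediam⟩

lemma subdivision_edist_inl_inr_add_one_le (hbip : G.Colorable 2) (x : V) (e : G.edgeSet) :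
    G.subdivision.edist (inl x) (inr e) + 1 ≤ 2 * G.ediam := by
  obtain ⟨w, hw, hxw⟩ := exists_mem_edist_add_one_le_ediam hbip e x
  calc G.subdivision.edist (inl x) (inr e) + 1
      ≤ G.subdivision.edist (inl x) (inl w) + G.subdivision.edist (inl w) (inr e) + 1 := by
        gcongr; exact G.subdivision.edist_triangle
    _ ≤ 2 * G.edist x w + 1 + 1 := by
        rw [subdivision_edist_inl_inl]; gcongr; exact subdivision_edist_inl_inr_le_one hw
    _ = 2 * (G.edist x w + 1) := by ring
    _ ≤ 2 * G.ediam := by gcongr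

lemma subdivision_ediam (hbip : G.Colorable 2) : G.subdivision.ediam = 2 * G.ediam := by
  refine le_antisymm (ediam_le_of_edist_le ?_) ?_
  · rintro (x | e) (y | f)
    · rw [subdivision_edist_inl_inl]; gcongr; exact edist_le_ediam
    · exact le_self_add.trans (subdivision_edist_inl_inr_add_one_le hbip x f)
    · rw [edist_comm]; exact le_self_add.trans (subdivision_edist_inl_inr_add_one_le hbip y e)
    · obtain ⟨a, ha⟩ : ∃ a, a ∈ (e : Sym2 V) := ⟨_, (e : Sym2 V).out_fst_mem⟩
      calc G.subdivision.edist (inr e) (inr f)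
          ≤ G.subdivision.edist (inr e) (inl a) + G.subdivision.edist (inl a) (inr f) :=
            G.subdivision.edist_triangle
        _ ≤ 1 + G.subdivision.edist (inl a) (inr f) := by
            gcongr; rw [edist_comm]; exact subdivision_edist_inl_inr_le_one ha
        _ ≤ 2 * G.ediam := by rw [add_comm]; exact subdivision_edist_inl_inr_add_one_le hbip a f
  · rw [ediam_eq_iSup_iSup_edist, ENat.mul_iSup]
    refine iSup_le fun x => ?_
    rw [ENat.mul_iSup]
    exact iSup_le fun y => subdivision_edist_inl_inl.symm.trans_le edist_le_ediam

end SimpleGraph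

theorem subdivision_diam_of_bipartite_general (G : SimpleGraph V) (hbip : G.Colorable 2) :
    G.subdivision.diam = 2 * G.diam := by
  simp [diam, subdivision_ediam hbip]

theorem subdivision_diam_of_bipartite [Fintype V] (G : SimpleGraph V) (hconn : G.Connected)
    (hbip : G.Colorable 2) (hne : G.edgeSet.Nonempty) :
    G.subdivision.diam = 2 * G.diam :=
  subdivision_diam_of_bipartite_general G hbip
end

section
/- If a connected graph Σ has diameter d and every d-arc of Σ is a d-geodesic, then the girth of Σ is at least 2d. -/
open SimpleGraph

variable {V : Type*}

/-- An `s`-arc of a graph: consecutive vertices are adjacent and there is no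
immediate backtracking. -/
def SimpleGraph.IsArc (G : SimpleGraph V) (s : ℕ) (a : ℕ → V) : Prop :=
  (∀ i < s, G.Adj (a i) (a (i + 1))) ∧ ∀ j, 0 < j → j < s → a (j - 1) ≠ a (j + 1)

/-!
A cycle `C` of length `g < 2d`, traversed periodically, is a `d`-arc, since `g ≥ 3`
rules out backtracking. Its end vertex is at position `r = d mod g` on `C`, so its distance from
the start is at most `min r (g - r)`, which is `< d`: if `g ≤ d` then `r < g ≤ d`, and otherwise
`r = d` and `g - d < d`. Hence this arc is not a geodesic.
-/

namespace SimpleGraph.Walk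

variable {G : SimpleGraph V} {u v : V}

lemma dist_getVert_le (p : G.Walk u v) (n : ℕ) : G.dist u (p.getVert n) ≤ n :=
  (dist_le (p.take n)).trans <| by simp [take_length]

lemma dist_getVert_le_length_sub (p : G.Walk u v) (n : ℕ) :
    G.dist (p.getVert n) v ≤ p.length - n :=
  (dist_le (p.drop n)).trans_eq (drop_length p n)

lemma getVert_add_one_mod_length (p : G.Walk u u) (n : ℕ) :
    p.getVert ((n + 1) % p.length) = p.getVert (n % p.length + 1) := by
  rcases Nat.eq_zero_or_pos p.length with h0 | hpos
  · simp [h0]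
  rw [← Nat.mod_add_mod]
  obtain hlt | hwrap : n % p.length + 1 < p.length ∨ n % p.length + 1 = p.length :=
    Nat.lt_or_eq_of_le (Nat.mod_lt n hpos)
  · rw [Nat.mod_eq_of_lt hlt]
  · rw [hwrap, Nat.mod_self, getVert_zero, getVert_length]

lemma IsCycle.isArc_getVert_mod {p : G.Walk u u} (hp : p.IsCycle) (s : ℕ) :
    G.IsArc s (fun n => p.getVert (n % p.length)) := by
  have hlen := hp.three_le_length
  refine ⟨fun i _ => ?_, fun j hj _ heq => ?_⟩
  · show G.Adj (p.getVert _) (p.getVert _)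
    rw [getVert_add_one_mod_length]
    exact p.adj_getVert_succ (Nat.mod_lt _ (by omega))
  · have hmod : (j - 1) % p.length = (j - 1 + 2) % p.length :=
      hp.getVert_injOn' (Nat.le_sub_one_of_lt (Nat.mod_lt _ (by omega)))
        (Nat.le_sub_one_of_lt (Nat.mod_lt _ (by omega))) (by rwa [show j - 1 + 2 = j + 1 by omega])
    have hdvd : p.length ∣ 2 := by
      simpa using (Nat.modEq_iff_dvd' (Nat.le_add_right (j - 1) 2)).mp hmod
    have := Nat.le_of_dvd two_pos hdvd
    omega

lemma IsCycle.dist_getVert_mod_lt {p : G.Walk u u} (hp : p.IsCycle) {d : ℕ}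
    (hlen : p.length < 2 * d) : G.dist u (p.getVert (d % p.length)) < d := by
  have hpos : 0 < p.length := by have := hp.three_le_length; omega
  have hfwd := p.dist_getVert_le (d % p.length)
  have hbwd := p.dist_getVert_le_length_sub (d % p.length)
  rw [dist_comm] at hbwd
  rcases le_or_gt p.length d with hgd | hdg
  · exact hfwd.trans_lt ((Nat.mod_lt d hpos).trans_le hgd)
  · rw [Nat.mod_eq_of_lt hdg] at hfwd hbwd ⊢
    omega

lemma IsCycle.two_mul_le_length_of_arcs_geodesic {p : G.Walk u u} (hp : p.IsCycle) {d : ℕ}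
    (harc : ∀ a : ℕ → V, G.IsArc d a → G.dist (a 0) (a d) = d) : 2 * d ≤ p.length := by
  by_contra! hlen
  have hgeod := harc _ (hp.isArc_getVert_mod d)
  simp only [Nat.zero_mod, getVert_zero] at hgeod
  exact (hp.dist_getVert_mod_lt hlen).ne hgeod

end SimpleGraph.Walk

theorem girth_ge_of_arcs_are_geodesics_general (G : SimpleGraph V)
    (d : ℕ) (hcyc : ¬ G.IsAcyclic)
    (harc : ∀ a : ℕ → V, G.IsArc d a → G.dist (a 0) (a d) = d) :
    2 * d ≤ G.girth := by
  obtain ⟨_, c, hc, hgirth⟩ := exists_girth_eq_length.mpr hcyc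
  exact hgirth ▸ hc.two_mul_le_length_of_arcs_geodesic harc

theorem girth_ge_of_arcs_are_geodesics [Fintype V] (G : SimpleGraph V) (hconn : G.Connected)
    (d : ℕ) (hd : 1 ≤ d) (hdiam : G.diam = d) (hcyc : ¬ G.IsAcyclic)
    (harc : ∀ a : ℕ → V, G.IsArc d a → G.dist (a 0) (a d) = d) :
    2 * d ≤ G.girth :=
  girth_ge_of_arcs_are_geodesics_general G d hcyc harc
end

section
/- Let Σ be a connected graph of diameter d whose girth is 2d+1, let e = {x,y} be an edge, and let u be a vertex with d(u,x) = d(u,y) = d. Then u lies on exactly two edges {u,w} with min(d(w,x),d(w,y)) = d−1. -/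
/-!
Since the girth exceeds `2d`, a vertex `u` at distance `d` from `x` has exactly one neighbour at
distance `d - 1` from `x`: two of them would give two distinct shortest `u`–`x` paths, hence a
cycle of length at most `2d`. The same holds for `y`, and the two neighbours differ, because a
vertex at distance `d - 1` from both ends of the edge `xy` lies on a cycle of length at most
`2d - 1`. Every other neighbour of `u` is at distance at least `d - 1` from `x` and from `y`.
-/

open SimpleGraph

namespace SimpleGraph

variable {V : Type*} {G : SimpleGraph V} {a b c u w w' x y z : V} {n : ℕ}

theorem Walk.IsPath.girth_le_length_add_of_ne {p q : G.Walk a b} (hp : p.IsPath)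
    (hq : q.IsPath) (hne : p ≠ q) : G.girth ≤ p.length + q.length := by
  obtain ⟨_, _, _, C, hC, hlen⟩ := hp.exists_isCycle_length_le_add_of_ne hq hne
  exact (girth_le_length hC).trans hlen

theorem Walk.dist_add_dist_le_length [DecidableEq V] (p : G.Walk a b) (hc : c ∈ p.support) :
    G.dist a c + G.dist c b ≤ p.length := by
  conv_rhs => rw [← p.take_spec hc, length_append]
  exact add_le_add (dist_le _) (dist_le _)

theorem Adj.dist_le_dist_add_one (h : G.Adj u w) (z : V) : G.dist u z ≤ G.dist w z + 1 := by
  rw [dist_comm, dist_comm (u := w)]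
  rcases h.symm.diff_dist_adj (u := z) with h' | h' | h' <;> omega

theorem exists_adj_dist_eq_of_dist_eq_add_one (h : G.dist u z = n + 1) :
    ∃ w, G.Adj u w ∧ G.dist w z = n := by
  obtain ⟨p, hp⟩ := exists_walk_of_dist_ne_zero (by omega : G.dist u z ≠ 0)
  rw [h] at hp
  cases p with
  | nil => simp at hp
  | cons hadj q =>
    refine ⟨_, hadj, le_antisymm ?_ ?_⟩
    · have := dist_le q
      rw [Walk.length_cons] at hp
      omega
    · have := hadj.dist_le_dist_add_one z
      omega

/-- Prefixing the edge `uv` to a shortest `v`–`z` path gives a shortest, hence simple, `u`–`z`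
path; two such paths through different neighbours close a cycle of length `2n + 2`. -/
theorem eq_of_adj_of_dist_eq_of_lt_girth (hg : 2 * n + 2 < G.girth) (hu : G.dist u z = n + 1)
    (hw : G.Adj u w) (hw' : G.Adj u w') (hwz : G.dist w z = n) (hw'z : G.dist w' z = n) :
    w = w' := by
  by_contra hne
  have huz : G.Reachable u z := Reachable.of_dist_ne_zero (by omega)
  obtain ⟨p, hp⟩ := (hw.reachable.symm.trans huz).exists_walk_length_eq_dist
  obtain ⟨q, hq⟩ := (hw'.reachable.symm.trans huz).exists_walk_length_eq_dist
  have hP : (Walk.cons hw p).IsPath := Walk.isPath_of_length_eq_dist _ (by rw [Walk.length_cons]; omega)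
  have hQ : (Walk.cons hw' q).IsPath := Walk.isPath_of_length_eq_dist _ (by rw [Walk.length_cons]; omega)
  have hPQ : Walk.cons hw p ≠ Walk.cons hw' q := fun h => hne (by
    simpa only [Walk.snd_cons] using congrArg Walk.snd h)
  have := hP.girth_le_length_add_of_ne hQ hPQ
  simp only [Walk.length_cons] at this
  omega

theorem Adj.girth_le_two_mul_dist_add_one (hxy : G.Adj x y) (hr : G.Reachable w x)
    (h : G.dist w x = G.dist w y) : G.girth ≤ 2 * G.dist w x + 1 := by
  classical
  obtain ⟨p, hp, hpl⟩ := hr.exists_path_of_dist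
  obtain ⟨q, hq, hql⟩ := (hr.trans hxy.reachable).exists_path_of_dist
  have hx : x ∉ q.support := fun hx => by
    have := q.dist_add_dist_le_length hx
    rw [dist_eq_one_iff_adj.mpr hxy] at this
    omega
  have hQ : (q.concat hxy.symm).IsPath := hq.concat hx hxy.symm
  have hPQ : p ≠ q.concat hxy.symm := fun heq => by
    have := congrArg Walk.length heq
    rw [Walk.length_concat] at this
    omega
  have := hp.girth_le_length_add_of_ne hQ hPQ
  rw [Walk.length_concat] at this
  omega

end SimpleGraph

theorem two_edges_to_previous_sphere_general {V : Type*} (G : SimpleGraph V)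
    (hconn : G.Connected) (d : ℕ)
    (hgirth : G.girth = 2 * d + 1) {x y : V} (hxy : G.Adj x y) (u : V)
    (hux : G.dist u x = d) (huy : G.dist u y = d) :
    {w : V | G.Adj u w ∧ min (G.dist w x) (G.dist w y) = d - 1}.ncard = 2 := by
  obtain ⟨n, rfl⟩ : ∃ n, d = n + 1 := Nat.exists_eq_add_one.mpr <| Nat.pos_of_ne_zero <| by
    rintro rfl
    obtain rfl := hconn.dist_eq_zero_iff.mp hux
    exact hxy.ne (hconn.dist_eq_zero_iff.mp huy)
  have hg : 2 * n + 2 < G.girth := by omega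
  obtain ⟨w₁, hw₁, hw₁x⟩ := exists_adj_dist_eq_of_dist_eq_add_one hux
  obtain ⟨w₂, hw₂, hw₂y⟩ := exists_adj_dist_eq_of_dist_eq_add_one huy
  have hne : w₁ ≠ w₂ := by
    rintro rfl
    have := hxy.girth_le_two_mul_dist_add_one (hconn w₁ x) (hw₁x.trans hw₂y.symm)
    omega
  suffices {w : V | G.Adj u w ∧ min (G.dist w x) (G.dist w y) = n + 1 - 1} = {w₁, w₂} by
    rw [this, Set.ncard_pair hne]
  ext w
  constructor
  · rintro ⟨hw, hmin⟩
    obtain h | h : G.dist w x = n ∨ G.dist w y = n := by omega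
    · exact .inl (eq_of_adj_of_dist_eq_of_lt_girth hg hux hw hw₁ h hw₁x)
    · exact .inr (eq_of_adj_of_dist_eq_of_lt_girth hg huy hw hw₂ h hw₂y)
  · rintro (rfl | rfl)
    · exact ⟨hw₁, by have := hw₁.dist_le_dist_add_one y; omega⟩
    · exact ⟨hw₂, by have := hw₂.dist_le_dist_add_one x; omega⟩

theorem two_edges_to_previous_sphere {V : Type*} [Fintype V] (G : SimpleGraph V)
    (hconn : G.Connected) (d : ℕ) (hd : 2 ≤ d) (hdiam : G.diam = d)
    (hgirth : G.girth = 2 * d + 1) {x y : V} (hxy : G.Adj x y) (u : V)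
    (hux : G.dist u x = d) (huy : G.dist u y = d) :
    {w : V | G.Adj u w ∧ min (G.dist w x) (G.dist w y) = d - 1}.ncard = 2 :=
  two_edges_to_previous_sphere_general G hconn d hgirth hxy u hux huy
end
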